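/- arXiv:2603.23363 — 3 statements merged into one kernel-verified Lean document; each statement's English description precedes it below -/
import Mathlib

section
/- For all 0 ≤ p ≤ k, λ_β^i(k,p) = [k choose p]_γ · γ^{−(k−p)p} · ∏_{l=p+1}^{k} (β − γ^{l−1−i}), where [k choose p]_γ denotes the Gaussian (q-)binomial coefficient at q = γ, with the convention that the empty product equals 1. -/
/-- Gaussian (q-)binomial coefficients, via the q-Pascal recursion. -/
def qbinom {R : Type*} [CommRing R] (q : R) : ℕ → ℕ → R
  | _, 0 => 1
  | 0, _ + 1 => 0
  | k + 1, p + 1 => qbinom q k (p + 1) + q ^ (k - p) * qbinom q k p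

/-- The scalar `R_β^i(k,l)`. -/
noncomputable def Rcoef {𝕜 : Type*} [Field 𝕜] (γ β : 𝕜) (i : ℤ) (k l : ℕ) : 𝕜 :=
  if l < k then β * γ ^ (-(l : ℤ)) - γ ^ ((k : ℤ) - 1 - i) else 1

/-- The recursively defined coefficients `λ_β^i(k,l)`. -/
noncomputable def lam {𝕜 : Type*} [Field 𝕜] (γ β : 𝕜) (i : ℤ) : ℕ → ℕ → 𝕜
  | 0, _ => 1
  | k + 1, 0 => Rcoef γ β i (k + 1) 0 * lam γ β i k 0
  | k + 1, l + 1 =>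
      if l + 1 = k + 1 then 1
      else Rcoef γ β i (k + 1) (l + 1) * lam γ β i k (l + 1) + lam γ β i k l

lemma qbinom_eq_zero {R : Type*} [CommRing R] (q : R) :
    ∀ k p : ℕ, k < p → qbinom q k p = 0 := by
  intro k
  induction k with
  | zero => intro p hp; match p, hp with
    | p + 1, _ => rfl
  | succ k ih =>
    intro p hp
    match p, hp with
    | p + 1, hp =>
      show qbinom q k (p + 1) + q ^ (k - p) * qbinom q k p = 0
      rw [ih _ (by omega), ih _ (by omega)]
      ring

lemma qbinom_self {R : Type*} [CommRing R] (q : R) : ∀ k : ℕ, qbinom q k k = 1 := by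
  intro k
  induction k with
  | zero => rfl
  | succ k ih =>
    show qbinom q k (k + 1) + q ^ (k - k) * qbinom q k k = 1
    rw [qbinom_eq_zero q k (k+1) (by omega), ih]
    simp

lemma qbinom_zero {R : Type*} [CommRing R] (q : R) (k : ℕ) : qbinom q k 0 = 1 := by
  cases k <;> rfl

/-- The key q-binomial identity. -/
lemma qbinom_mul {R : Type*} [CommRing R] (q : R) :
    ∀ k p : ℕ, p < k →
      qbinom q k (p + 1) * (1 - q ^ (p + 1)) = qbinom q k p * (1 - q ^ (k - p)) := by
  intro k
  induction k with
  | zero => intro p hp; omega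
  | succ k ih =>
    intro p hp
    rcases Nat.lt_or_ge p k with h | h
    · -- p < k
      have hrec : qbinom q (k+1) (p+1) = qbinom q k (p+1) + q ^ (k - p) * qbinom q k p := rfl
      rcases Nat.eq_zero_or_pos p with rfl | hpos
      · have h1 := ih 0 h
        rw [qbinom_zero] at h1
        rw [hrec, qbinom_zero, qbinom_zero]
        simp only [Nat.sub_zero] at h1 ⊢
        linear_combination h1
      · obtain ⟨p', rfl⟩ : ∃ p', p = p' + 1 := ⟨p - 1, by omega⟩
        have hrec' : qbinom q (k+1) (p'+1) = qbinom q k (p'+1) + q ^ (k - p') * qbinom q k p' := rfl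
        have h1 := ih (p'+1) h
        have h2 := ih p' (by omega)
        have e1 : k - p' = (k - (p'+1)) + 1 := by omega
        have e2 : k + 1 - (p'+1) = (k - (p'+1)) + 1 := by omega
        set m := k - (p'+1) with hm
        rw [hrec, hrec', e1, e2]
        rw [e1] at h2
        linear_combination h1 + q ^ (m+1) * h2
    · -- p = k
      have hpk : p = k := by omega
      subst hpk
      rw [qbinom_self]
      have e2 : p + 1 - p = 1 := by omega
      rw [e2]
      rcases Nat.eq_zero_or_pos p with rfl | hpos
      · rw [qbinom_zero]
      · obtain ⟨p', rfl⟩ : ∃ p', p = p' + 1 := ⟨p - 1, by omega⟩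
        have e3 : p' + 1 - p' = 1 := by omega
        have hrec : qbinom q (p'+1+1) (p'+1) = qbinom q (p'+1) (p'+1)
            + q ^ (p'+1-p') * qbinom q (p'+1) p' := rfl
        rw [qbinom_self, e3] at hrec
        have h2 := ih p' (by omega)
        rw [qbinom_self, e3] at h2
        rw [hrec]
        linear_combination q * h2

/-- Pure algebra helper (cleared of denominators). -/
lemma helper_ring {R : Type*} [CommRing R] (γ u β A B : R) (m p' : ℕ)
    (key : A * (1 - γ ^ (p' + 1)) = B * (1 - γ ^ (m + 1))) :
    (A + γ ^ (m + 1) * B) * (β - γ ^ (m + p' + 1) * u)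
      = A * (β - γ ^ (m + 2 * p' + 2) * u) + γ ^ (m + 1) * B * (β - γ ^ p' * u) := by
  linear_combination (-(γ ^ (m + p' + 1) * u)) * key

theorem lam_closed_formula {𝕜 : Type*} [Field 𝕜] [CharZero 𝕜] (n : ℕ) (hn : 1 ≤ n)
    (γ : 𝕜) (hγ : IsPrimitiveRoot γ n) (β : 𝕜) (hβ : β ≠ 0) (i : ℤ)
    (k p : ℕ) (hp : p ≤ k) :
    lam γ β i k p
      = qbinom γ k p * γ ^ (-(((k : ℤ) - p) * p))
          * ∏ l ∈ Finset.Icc (p + 1) k, (β - γ ^ ((l : ℤ) - 1 - i)) := by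
  have hγ0 : γ ≠ 0 := hγ.ne_zero (by omega)
  induction k generalizing p with
  | zero =>
    interval_cases p
    simp [lam, qbinom]
  | succ k ih =>
    rcases Nat.eq_zero_or_pos p with rfl | hpos
    · -- p = 0
      show Rcoef γ β i (k + 1) 0 * lam γ β i k 0 = _
      rw [ih 0 (by omega)]
      rw [Rcoef, if_pos (by omega)]
      rw [Finset.prod_Icc_succ_top (by omega)]
      rw [qbinom_zero, qbinom_zero]
      simp only [Nat.cast_zero, neg_zero, mul_zero, zero_mul, zpow_zero, sub_zero]
      ring
    · obtain ⟨p', rfl⟩ : ∃ p', p = p' + 1 := ⟨p - 1, by omega⟩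
      rcases Nat.eq_or_lt_of_le hp with heq | hlt
      · -- p = k + 1
        have h1 : p' + 1 = k + 1 := heq
        show (if p' + 1 = k + 1 then (1:𝕜) else _) = _
        rw [if_pos h1]
        obtain rfl : p' = k := by omega
        rw [qbinom_self]
        rw [Finset.Icc_eq_empty (by omega)]
        simp
      · -- p' + 1 ≤ k
        obtain ⟨m, rfl⟩ : ∃ m, k = m + (p' + 1) := ⟨k - (p'+1), by omega⟩
        show (if p' + 1 = m + (p'+1) + 1 then (1:𝕜)
            else Rcoef γ β i (m+(p'+1)+1) (p'+1) * lam γ β i (m+(p'+1)) (p'+1)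
              + lam γ β i (m+(p'+1)) p') = _
        rw [if_neg (by omega)]
        rw [ih (p'+1) (by omega), ih p' (by omega)]
        rw [Rcoef, if_pos (by omega)]
        set u := γ ^ (-i) with hu
        set A := qbinom γ (m+(p'+1)) (p'+1) with hA
        set B := qbinom γ (m+(p'+1)) p' with hB
        have key : A * (1 - γ ^ (p'+1)) = B * (1 - γ ^ (m+1)) := by
          have := qbinom_mul γ (m+(p'+1)) p' (by omega)
          rwa [show m + (p'+1) - p' = m+1 by omega] at this
        have hrec : qbinom γ (m+(p'+1)+1) (p'+1) = A + γ ^ (m+1) * B := by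
          show qbinom γ (m+(p'+1)) (p'+1) + γ ^ (m+(p'+1) - p') * qbinom γ (m+(p'+1)) p' = _
          rw [show m+(p'+1) - p' = m+1 by omega]
        rw [hrec]
        rw [Finset.prod_Icc_succ_top (by omega)]
        have hins : Finset.Icc (p'+1) (m+(p'+1)) = insert (p'+1) (Finset.Icc (p'+2) (m+(p'+1))) := by
          ext x; simp; omega
        rw [hins, Finset.prod_insert (by simp)]
        set Q := ∏ l ∈ Finset.Icc (p'+2) (m+(p'+1)), (β - γ ^ ((l:ℤ) - 1 - i)) with hQ
        have c1 : (γ:𝕜) ^ (-((((m + (p' + 1) : ℕ) : ℤ) - ((p' + 1 : ℕ) : ℤ)) * ((p' + 1 : ℕ) : ℤ)))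
            = (γ ^ (m * (p' + 1)))⁻¹ := by
          rw [← zpow_natCast γ (m * (p' + 1)), ← zpow_neg]
          congr 1; push_cast; ring
        have c2 : (γ:𝕜) ^ (-((((m + (p' + 1) : ℕ) : ℤ) - ((p' : ℕ) : ℤ)) * ((p' : ℕ) : ℤ)))
            = (γ ^ ((m + 1) * p'))⁻¹ := by
          rw [← zpow_natCast γ ((m + 1) * p'), ← zpow_neg]
          congr 1; push_cast; ring
        have c3 : (γ:𝕜) ^ (-((((m + (p' + 1) + 1 : ℕ) : ℤ) - ((p' + 1 : ℕ) : ℤ)) * ((p' + 1 : ℕ) : ℤ)))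
            = (γ ^ ((m + 1) * (p' + 1)))⁻¹ := by
          rw [← zpow_natCast γ ((m + 1) * (p' + 1)), ← zpow_neg]
          congr 1; push_cast; ring
        have c4 : (γ:𝕜) ^ (((m + (p' + 1) + 1 : ℕ) : ℤ) - 1 - i) = γ ^ (m + p' + 1) * u := by
          rw [hu, ← zpow_natCast γ (m + p' + 1), ← zpow_add₀ hγ0]
          congr 1; push_cast; ring
        have c5 : (γ:𝕜) ^ (((p' + 1 : ℕ) : ℤ) - 1 - i) = γ ^ p' * u := by
          rw [hu, ← zpow_natCast γ p', ← zpow_add₀ hγ0]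
          congr 1; push_cast; ring
        have c6 : (γ:𝕜) ^ (-((p' + 1 : ℕ) : ℤ)) = (γ ^ (p' + 1))⁻¹ := by
          rw [← zpow_natCast γ (p' + 1), ← zpow_neg]
        rw [c1, c2, c3, c4, c5, c6]
        field_simp
        linear_combination (Q * u * γ ^ (2*m*p' + 3*p' + 2*m + 2)) * key
end

section
/- For all 0 ≤ l ≤ k and all 0 ≤ p ≤ k − l, the identity λ_β^i(k, p+l) · λ_β^i(p+l, l) = [k−l choose p]_γ · λ_β^i(k, l) · γ^{−(k−(p+l))p} holds. -/
section aux
variable {R : Type*} [CommRing R]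

lemma qbinom_map {S F : Type*} [CommRing S] [FunLike F R S] [RingHomClass F R S] (f : F) (q : R) :
    ∀ k p, f (qbinom q k p) = qbinom (f q) k p
  | _, 0 => by simp [qbinom]
  | 0, _ + 1 => by simp [qbinom]
  | k + 1, p + 1 => by
    simp [qbinom, qbinom_map f q k (p+1), qbinom_map f q k p]

lemma qbinom_gt (q : R) : ∀ k p, k < p → qbinom q k p = 0
  | 0, _ + 1, _ => rfl
  | k + 1, p + 1, h => by
    rw [qbinom, qbinom_gt q k (p+1) (by omega), qbinom_gt q k p (by omega)]
    ring

/-- q-integer -/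
def qint (q : R) (m : ℕ) : R := ∑ j ∈ Finset.range m, q ^ j

/-- q-factorial -/
def qfact (q : R) (k : ℕ) : R := ∏ j ∈ Finset.range k, qint q (j + 1)

lemma qint_add (q : R) (a b : ℕ) : qint q (a + b) = qint q a + q ^ a * qint q b := by
  simp only [qint, Finset.sum_range_add, pow_add, Finset.mul_sum]

lemma qfact_succ (q : R) (k : ℕ) : qfact q (k + 1) = qfact q k * qint q (k + 1) :=
  Finset.prod_range_succ _ _

lemma qbinom_mul_qfact (q : R) : ∀ k p, p ≤ k →
    qbinom q k p * (qfact q p * qfact q (k - p)) = qfact q k := by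
  intro k
  induction k with
  | zero =>
    intro p hp
    interval_cases p
    simp [qbinom, qfact]
  | succ k ih =>
    intro p hp
    match p with
    | 0 => simp [qbinom, qfact]
    | p + 1 =>
      rcases Nat.lt_or_ge p k with h | h
      · obtain ⟨m, rfl⟩ : ∃ m, k = p + 1 + m := ⟨k - (p+1), by omega⟩
        have e1 := ih (p+1) (by omega)
        have e2 := ih p (by omega)
        have hs1 : p + 1 + m - (p + 1) = m := by omega
        have hs2 : p + 1 + m - p = m + 1 := by omega
        have hs3 : p + 1 + m + 1 - (p + 1) = m + 1 := by omega
        rw [hs1] at e1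
        rw [hs2] at e2
        show (qbinom q (p+1+m) (p+1) + q ^ (p+1+m-p) * qbinom q (p+1+m) p) *
          (qfact q (p+1) * qfact q (p+1+m+1-(p+1))) = qfact q (p+1+m+1)
        rw [hs2, hs3]
        have hi : qint q (p + 1 + m + 1) = qint q (m + 1) + q ^ (m + 1) * qint q (p + 1) := by
          have : p + 1 + m + 1 = (m + 1) + (p + 1) := by omega
          rw [this, qint_add]
        rw [qfact_succ q (p+1+m), hi, qfact_succ q m, qfact_succ q p]
        rw [qfact_succ q p] at e1
        rw [qfact_succ q m] at e2
        linear_combination (qint q (m+1)) * e1 + (q ^ (m+1) * qint q (p+1)) * e2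
      · have : p = k := by omega
        subst this
        have e := ih p le_rfl
        show (qbinom q p (p+1) + q ^ (p - p) * qbinom q p p) *
          (qfact q (p+1) * qfact q (p+1-(p+1))) = qfact q (p+1)
        rw [qbinom_gt q p (p+1) (by omega), Nat.sub_self, Nat.sub_self] at *
        simp only [pow_zero, zero_add, one_mul] at *
        rw [qfact_succ]
        have h0 : qfact q 0 = 1 := rfl
        rw [h0, mul_one] at e ⊢
        linear_combination qint q (p+1) * e

lemma qint_X_ne_zero (m : ℕ) (hm : 1 ≤ m) :
    qint (Polynomial.X : Polynomial ℚ) m ≠ 0 := by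
  intro h
  have := congrArg (Polynomial.eval 1) h
  simp [qint] at this
  omega

lemma qfact_X_ne_zero (k : ℕ) : qfact (Polynomial.X : Polynomial ℚ) k ≠ 0 := by
  unfold qfact
  exact Finset.prod_ne_zero_iff.2 fun j _ => qint_X_ne_zero (j+1) (by omega)

lemma qbinom_subset_X (k l p : ℕ) (h : l + p ≤ k) :
    qbinom (Polynomial.X : Polynomial ℚ) k (p + l) *
      qbinom (Polynomial.X : Polynomial ℚ) (p + l) l
      = qbinom (Polynomial.X : Polynomial ℚ) (k - l) p *
          qbinom (Polynomial.X : Polynomial ℚ) k l := by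
  set X : Polynomial ℚ := Polynomial.X
  obtain ⟨m, rfl⟩ : ∃ m, k = l + p + m := ⟨k - (l + p), by omega⟩
  have F : qfact X l * qfact X p * qfact X m ≠ 0 :=
    mul_ne_zero (mul_ne_zero (qfact_X_ne_zero l) (qfact_X_ne_zero p)) (qfact_X_ne_zero m)
  apply mul_right_cancel₀ F
  have e1 := qbinom_mul_qfact X (l + p + m) (p + l) (by omega)
  have e2 := qbinom_mul_qfact X (p + l) l (by omega)
  have e3 := qbinom_mul_qfact X (l + p + m - l) p (by omega)
  have e4 := qbinom_mul_qfact X (l + p + m) l (by omega)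
  have h1 : l + p + m - (p + l) = m := by omega
  have h2 : p + l - l = p := by omega
  have h3 : l + p + m - l = p + m := by omega
  have h4 : p + m - p = m := by omega
  rw [h1] at e1; rw [h2] at e2; rw [h3] at e3 e4 ⊢; rw [h4] at e3
  calc qbinom X (l+p+m) (p+l) * qbinom X (p+l) l * (qfact X l * qfact X p * qfact X m)
      = (qbinom X (p+l) l * (qfact X l * qfact X p)) * qbinom X (l+p+m) (p+l) * qfact X m := by
        ring
    _ = qfact X (p+l) * qbinom X (l+p+m) (p+l) * qfact X m := by rw [e2]
    _ = qbinom X (l+p+m) (p+l) * (qfact X (p+l) * qfact X m) := by ring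
    _ = qfact X (l+p+m) := e1
    _ = qbinom X (l+p+m) l * (qfact X l * qfact X (p+m)) := e4.symm
    _ = qbinom X (l+p+m) l * (qfact X l * (qbinom X (p+m) p * (qfact X p * qfact X m))) := by
        rw [e3]
    _ = qbinom X (p+m) p * qbinom X (l+p+m) l * (qfact X l * qfact X p * qfact X m) := by ring

lemma qbinom_subset {𝕜 : Type*} [Field 𝕜] [CharZero 𝕜] (γ : 𝕜) (k l p : ℕ) (h : l + p ≤ k) :
    qbinom γ k (p + l) * qbinom γ (p + l) l = qbinom γ (k - l) p * qbinom γ k l := by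
  have := congrArg (Polynomial.aeval γ : Polynomial ℚ →ₐ[ℚ] 𝕜) (qbinom_subset_X k l p h)
  simpa [map_mul, qbinom_map (Polynomial.aeval γ : Polynomial ℚ →ₐ[ℚ] 𝕜)] using this

end aux

/-- The closed formula for `λ_β^i(k,p)`. -/
noncomputable def lamC {𝕜 : Type*} [Field 𝕜] (γ β : 𝕜) (i : ℤ) (k p : ℕ) : 𝕜 :=
  qbinom γ k p * γ ^ (-(((k : ℤ) - p) * p))
    * ∏ l ∈ Finset.Icc (p + 1) k, (β - γ ^ ((l : ℤ) - 1 - i))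

theorem lam_mult_identity {𝕜 : Type*} [Field 𝕜] [CharZero 𝕜] (n : ℕ) (hn : 1 ≤ n)
    (γ : 𝕜) (hγ : IsPrimitiveRoot γ n) (β : 𝕜) (hβ : β ≠ 0) (i : ℤ)
    (k l p : ℕ) (hl : l ≤ k) (hp : p ≤ k - l) :
    lamC γ β i k (p + l) * lamC γ β i (p + l) l
      = qbinom γ (k - l) p * lamC γ β i k l * γ ^ (-(((k : ℤ) - (p + l)) * p)) := by
  have hγ0 : γ ≠ 0 := hγ.ne_zero (by omega)
  have hq := qbinom_subset γ k l p (by omega)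
  have hprod : (∏ j ∈ Finset.Icc (l + 1) (p + l), (β - γ ^ ((j : ℤ) - 1 - i))) *
      ∏ j ∈ Finset.Icc (p + l + 1) k, (β - γ ^ ((j : ℤ) - 1 - i))
      = ∏ j ∈ Finset.Icc (l + 1) k, (β - γ ^ ((j : ℤ) - 1 - i)) := by
    simp only [Finset.Icc_add_one_left_eq_Ioc]
    exact Finset.prod_Ioc_consecutive _ (by omega) (by omega)
  have hz : γ ^ (-(((k : ℤ) - ((p : ℤ) + l)) * ((p : ℤ) + l))) *
        γ ^ (-((((p : ℤ) + l) - l) * l))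
      = γ ^ (-(((k : ℤ) - l) * l)) * γ ^ (-(((k : ℤ) - ((p : ℤ) + l)) * p)) := by
    rw [← zpow_add₀ hγ0, ← zpow_add₀ hγ0]
    congr 1
    ring
  unfold lamC
  rw [show ((p + l : ℕ) : ℤ) = (p : ℤ) + l from by push_cast; ring]
  linear_combination
    (γ ^ (-(((k : ℤ) - ((p : ℤ) + l)) * ((p : ℤ) + l))) * γ ^ (-((((p : ℤ) + l) - l) * l)) *
      ((∏ j ∈ Finset.Icc (l + 1) (p + l), (β - γ ^ ((j : ℤ) - 1 - i))) *
        ∏ j ∈ Finset.Icc (p + l + 1) k, (β - γ ^ ((j : ℤ) - 1 - i)))) * hq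
    + (qbinom γ (k - l) p * qbinom γ k l *
      ((∏ j ∈ Finset.Icc (l + 1) (p + l), (β - γ ^ ((j : ℤ) - 1 - i))) *
        ∏ j ∈ Finset.Icc (p + l + 1) k, (β - γ ^ ((j : ℤ) - 1 - i)))) * hz
    + (qbinom γ (k - l) p * qbinom γ k l * γ ^ (-(((k : ℤ) - l) * l)) *
        γ ^ (-(((k : ℤ) - ((p : ℤ) + l)) * p))) * hprod
end

section
/- Let 𝕜 be an algebraically closed field, R = 𝕜[x, x⁻¹], and M a nonzero finitely generated R-module. Then there exists a scalar α ∈ 𝕜 with α ≠ 0 such that multiplication by (x − α) on M is not bijective. -/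
open LaurentPolynomial

instance : AddMonoid.FG ℤ := by
  rw [AddMonoid.fg_iff]
  refine ⟨{1, -1}, ?_, Set.toFinite _⟩
  rw [eq_top_iff]
  intro n _
  induction n using Int.induction_on with
  | zero => exact AddSubmonoid.zero_mem _
  | succ k ih =>
      exact AddSubmonoid.add_mem _ (ih trivial) (AddSubmonoid.subset_closure (by simp))
  | pred k ih =>
      have : (-(k : ℤ) - 1) = -(k : ℤ) + (-1) := by ring
      rw [this]
      exact AddSubmonoid.add_mem _ (ih trivial) (AddSubmonoid.subset_closure (by simp))

theorem exists_scalar_not_bijective {𝕜 : Type*} [Field 𝕜] [IsAlgClosed 𝕜]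
    (M : Type*) [AddCommGroup M] [Module (LaurentPolynomial 𝕜) M]
    [Module.Finite (LaurentPolynomial 𝕜) M] [Nontrivial M] :
    ∃ α : 𝕜, α ≠ 0 ∧
      ¬ Function.Bijective
        (fun m : M => (LaurentPolynomial.T 1 - LaurentPolynomial.C α) • m) := by
  set R := LaurentPolynomial 𝕜
  have hann : Module.annihilator R M ≠ ⊤ := by
    intro h
    obtain ⟨x, hx⟩ := exists_ne (0 : M)
    have : (1 : R) ∈ Module.annihilator R M := h ▸ Submodule.mem_top
    exact hx (by simpa using Module.mem_annihilator.mp this x)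
  obtain ⟨m, hm, hle⟩ := Ideal.exists_le_maximal _ hann
  haveI : m.IsMaximal := hm
  letI : Field (R ⧸ m) := Ideal.Quotient.field m
  haveI : Algebra.FiniteType 𝕜 R := AddMonoidAlgebra.finiteType_of_fg 𝕜 ℤ
  haveI : Algebra.FiniteType 𝕜 (R ⧸ m) :=
    Algebra.FiniteType.of_surjective
      (Ideal.Quotient.mkₐ 𝕜 m) (Ideal.Quotient.mkₐ_surjective 𝕜 m)
  haveI : Module.Finite 𝕜 (R ⧸ m) := finite_of_finite_type_of_isJacobsonRing 𝕜 (R ⧸ m)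
  haveI : Algebra.IsIntegral 𝕜 (R ⧸ m) := Algebra.IsIntegral.of_finite 𝕜 (R ⧸ m)
  obtain ⟨α, hα⟩ := (IsAlgClosed.algebraMap_bijective_of_isIntegral
    (k := 𝕜)).2 (Ideal.Quotient.mk m (T 1))
  have hCα : Ideal.Quotient.mk m (C α) = algebraMap 𝕜 (R ⧸ m) α := by
    rw [C_eq_algebraMap]
    rfl
  have ht : (T 1 - C α : R) ∈ m := by
    rw [← Ideal.Quotient.eq_zero_iff_mem, map_sub, hCα, hα, sub_self]
  refine ⟨α, ?_, ?_⟩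
  · rintro rfl
    have hTm : (T 1 : R) ∈ m := by simpa using ht
    exact hm.ne_top (m.eq_top_of_isUnit_mem hTm (isUnit_T 1))
  · intro hbij
    have hsurj := hbij.2
    have hle2 : (⊤ : Submodule R M) ≤ m • ⊤ := by
      intro x _
      obtain ⟨y, hy⟩ := hsurj x
      rw [← hy]
      exact Submodule.smul_mem_smul ht Submodule.mem_top
    obtain ⟨r, hr1, hr0⟩ :=
      Submodule.exists_sub_one_mem_and_smul_eq_zero_of_fg_of_le_smul m ⊤
        (Module.Finite.fg_top (R := R) (M := M)) hle2
    have hrann : r ∈ Module.annihilator R M :=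
      Module.mem_annihilator.mpr fun x => hr0 x Submodule.mem_top
    have h1 : (1 : R) ∈ m := by
      have := m.sub_mem (hle hrann) hr1
      simpa using this
    exact hm.ne_top ((Ideal.eq_top_iff_one m).mpr h1)
end
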